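/- The partition π_T of {1,…,n} associated to a binary tree T of size n (finest partition where a vertex and its right child lie in the same block, with vertices labelled by in-order traversal) is a noncrossing partition. -/
import Mathlib


/-- Planar binary trees. -/
inductive BT : Type
  | leaf : BT
  | node : BT → BT → BT
deriving DecidableEq

namespace BT

/-- Number of internal vertices. -/
def size : BT → ℕ
  | leaf => 0
  | node l r => l.size + r.size + 1

/-- One left rotation somewhere in the tree (covering relation of the Tamari lattice). -/
inductive Rot : BT → BT → Prop
  | root (a b c : BT) : Rot (node (node a b) c) (node a (node b c))
  | left {l l' : BT} (r : BT) : Rot l l' → Rot (node l r) (node l' r)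
  | right (l : BT) {r r' : BT} : Rot r r' → Rot (node l r) (node l r')

/-- The Tamari order: reflexive transitive closure of left rotations. -/
def tamariLE (S T : BT) : Prop := Relation.ReflTransGen Rot S T

/-- The partial order induced by a binary tree on `{1,…,size}` via in-order labelling:
`rel T i j` iff the vertex labelled `i` lies in the subtree rooted at the vertex labelled `j`. -/
def rel : BT → ℕ → ℕ → Prop
  | leaf, _, _ => False
  | node l r, i, j =>
      (j = l.size + 1 ∧ 1 ≤ i ∧ i ≤ l.size + r.size + 1) ∨
      rel l i j ∨
      (∃ i' j', rel r i' j' ∧ i = i' + l.size + 1 ∧ j = j' + l.size + 1)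

/-- Decreasing relations of a tree: pairs `(c, a)` with `a < c` and `c ◁ a`. -/
def Dec (T : BT) : Set (ℕ × ℕ) := {p | p.2 < p.1 ∧ T.rel p.1 p.2}

/-- Increasing relations of a tree: pairs `(a, c)` with `a < c` and `a ◁ c`. -/
def Inc (T : BT) : Set (ℕ × ℕ) := {p | p.1 < p.2 ∧ T.rel p.1 p.2}

/-- Left/right mirror image of a planar binary tree. -/
def mirror : BT → BT
  | leaf => leaf
  | node l r => node r.mirror l.mirror

/-- In-order label of the root (0 for the empty tree). -/
def rootLabel : BT → ℕ
  | leaf => 0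
  | node l _ => l.size + 1

/-- `rcRel T i j` iff, under in-order labelling, the vertex `j` is the right child of vertex `i`. -/
def rcRel : BT → ℕ → ℕ → Prop
  | leaf, _, _ => False
  | node l r, i, j =>
      (i = l.size + 1 ∧ r ≠ leaf ∧ j = l.size + 1 + r.rootLabel) ∨
      rcRel l i j ∨
      (∃ i' j', rcRel r i' j' ∧ i = i' + l.size + 1 ∧ j = j' + l.size + 1)

/-- `graft T i S` grafts the root of `S` on the `i`-th leaf of `T` (leaves numbered 1,…,size+1
from left to right). -/
def graft : BT → ℕ → BT → BT
  | leaf, _, S => S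
  | node l r, i, S =>
      if i ≤ l.size + 1 then node (l.graft i S) r
      else node l (r.graft (i - (l.size + 1)) S)

end BT

/-- An interval-poset of size `n`: a partial order on `{1,…,n}` (encoded as a relation on `ℕ`
supported and reflexive on `{1,…,n}`) satisfying the two interval-poset conditions. -/
def IsIntervalPoset (n : ℕ) (r : ℕ → ℕ → Prop) : Prop :=
  (∀ a b, r a b → 1 ≤ a ∧ a ≤ n ∧ 1 ≤ b ∧ b ≤ n) ∧
  (∀ a, 1 ≤ a → a ≤ n → r a a) ∧
  (∀ a b c, r a b → r b c → r a c) ∧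
  (∀ a b, r a b → r b a → a = b) ∧
  (∀ a b c, a < b → b < c → r a c → r b c) ∧
  (∀ a b c, a < b → b < c → r c a → r c b)

/-- The Châtel–Pons interval-poset of an interval `[S,T]`: reflexivity together with the
decreasing relations of `S` and the increasing relations of `T`. -/
def ipOf (S T : BT) : ℕ → ℕ → Prop := fun a b =>
  (a = b ∧ 1 ≤ a ∧ a ≤ S.size) ∨ (b < a ∧ S.rel a b) ∨ (a < b ∧ T.rel a b)

/-- `HasseCov r a b`: the relation `a ◁ b` is a cover relation (an edge `a → b` of the
Hasse diagram) of the poset `r`. -/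
def HasseCov (r : ℕ → ℕ → Prop) (a b : ℕ) : Prop :=
  r a b ∧ a ≠ b ∧ ∀ c, r a c → r c b → c = a ∨ c = b

/-- An exceptional interval-poset: the Hasse diagram contains no configuration
`y → x`, `y → z` with `x < y < z`. -/
def IsExceptional (n : ℕ) (r : ℕ → ℕ → Prop) : Prop :=
  IsIntervalPoset n r ∧
  ¬∃ x y z, x < y ∧ y < z ∧ HasseCov r y x ∧ HasseCov r y z

/-- A noncrossing tree in the based regular `(n+1)`-gon, with vertices `0,…,n`:
a spanning tree whose edges pairwise do not cross. Boundary edge `i` (for `1 ≤ i ≤ n`)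
joins vertices `i-1` and `i`; the base joins vertices `0` and `n`. -/
def IsNCTree (n : ℕ) (G : SimpleGraph (Fin (n + 1))) : Prop :=
  G.IsTree ∧
  ∀ a b c d : Fin (n + 1), G.Adj a b → G.Adj c d →
    ¬((a : ℕ) < c ∧ (c : ℕ) < b ∧ (b : ℕ) < d)

/-- Adjacency in a graph on `Fin (n+1)`, read on natural numbers. -/
def adjN (n : ℕ) (G : SimpleGraph (Fin (n + 1))) (a b : ℕ) : Prop :=
  ∃ (ha : a < n + 1) (hb : b < n + 1), G.Adj ⟨a, ha⟩ ⟨b, hb⟩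

/-- `EdgeLabel n G a b i`: the edge of the noncrossing tree `G` joining vertices `a < b`
carries the label `i`, i.e. it separates boundary edge `i` from the base and `i` is either
the edge itself (boundary case) or an open boundary edge. -/
def EdgeLabel (n : ℕ) (G : SimpleGraph (Fin (n + 1))) (a b i : ℕ) : Prop :=
  a < b ∧ b ≤ n ∧ adjN n G a b ∧ a < i ∧ i ≤ b ∧ (b = a + 1 ∨ ¬adjN n G (i - 1) i)

/-- The relation `◁_T` induced by a noncrossing tree: `i ◁ j` iff the edge labelled `i`
is separated from the base by the edge labelled `j` (plus reflexivity on `{1,…,n}`). -/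
def ncRel (n : ℕ) (G : SimpleGraph (Fin (n + 1))) : ℕ → ℕ → Prop := fun i j =>
  (i = j ∧ 1 ≤ i ∧ i ≤ n) ∨
  ∃ a b c d, EdgeLabel n G a b i ∧ EdgeLabel n G c d j ∧ c ≤ a ∧ b ≤ d ∧ ¬(a = c ∧ b = d)

/-- The graph `T_P` associated to an interval-poset `P`: for each `v`, an edge from the left
side of `min {x | x ◁ v}` (vertex `min − 1`) to the right side of `max {x | x ◁ v}`. -/
noncomputable def graphOf (n : ℕ) (r : ℕ → ℕ → Prop) : SimpleGraph (Fin (n + 1)) :=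
  SimpleGraph.fromRel (fun a b =>
    ∃ v, 1 ≤ v ∧ v ≤ n ∧ (a : ℕ) + 1 = sInf {x | r x v} ∧ (b : ℕ) = sSup {x | r x v})

/-- The partition `π_T` of a binary tree, as an equivalence-type relation: the finest
partition in which every vertex and its right child lie in the same block. -/
def sameBlock (T : BT) : ℕ → ℕ → Prop :=
  Relation.EqvGen (fun a b => T.rcRel a b ∨ T.rcRel b a)

/-- A relation (thought of as "same block of a partition") is noncrossing. -/
def IsNoncrossingRel (r : ℕ → ℕ → Prop) : Prop :=
  ¬∃ i j k l, i < j ∧ j < k ∧ k < l ∧ r i k ∧ r j l ∧ ¬r i j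

/-- The partition `π_T` of `{1,…,n}` associated to a binary tree, restricted to its support. -/
def partOf (T : BT) : ℕ → ℕ → Prop := fun a b =>
  sameBlock T a b ∧ 1 ≤ a ∧ a ≤ T.size ∧ 1 ≤ b ∧ b ≤ T.size

/-- A noncrossing partition of `{1,…,n}`, encoded as its "same block" equivalence relation. -/
def NCPartition (n : ℕ) (r : ℕ → ℕ → Prop) : Prop :=
  (∀ a b, r a b → 1 ≤ a ∧ a ≤ n ∧ 1 ≤ b ∧ b ≤ n) ∧
  (∀ a, 1 ≤ a → a ≤ n → r a a) ∧
  (∀ a b, r a b → r b a) ∧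
  (∀ a b c, r a b → r b c → r a c) ∧
  IsNoncrossingRel r

/-- `SubtreeAt S i j A`: `A` is a (nonempty) subtree of `S` rooted at an internal vertex,
whose leaves are the leaves `i,…,j` of `S`. -/
def SubtreeAt : BT → ℕ → ℕ → BT → Prop
  | .leaf, _, _, _ => False
  | .node l r, i, j, A =>
      (A = .node l r ∧ i = 1 ∧ j = (BT.node l r).size + 1) ∨
      SubtreeAt l i j A ∨
      (∃ i' j', SubtreeAt r i' j' A ∧ i = i' + l.size + 1 ∧ j = j' + l.size + 1)

/-- A new interval of `Tam n`: an interval that cannot be obtained as the grafting of two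
intervals of smaller sizes. -/
def IsNewInterval (n : ℕ) (S T : BT) : Prop :=
  S.size = n ∧ T.size = n ∧ BT.tamariLE S T ∧
  ¬∃ (S1 T1 S2 T2 : BT) (i : ℕ),
      S1.size = T1.size ∧ S2.size = T2.size ∧ S1.size < n ∧ S2.size < n ∧
      BT.tamariLE S1 T1 ∧ BT.tamariLE S2 T2 ∧ 1 ≤ i ∧ i ≤ S1.size + 1 ∧
      S = S1.graft i S2 ∧ T = T1.graft i T2

/-- The rise of a relation of size `n`: keep the decreasing relations, shift the increasing
relations by `+1`, on the ground set `{1,…,n+1}`. -/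
def riseRel (n : ℕ) (r : ℕ → ℕ → Prop) : ℕ → ℕ → Prop := fun a b =>
  (a = b ∧ 1 ≤ a ∧ a ≤ n + 1) ∨ (b < a ∧ r a b) ∨ (a < b ∧ 2 ≤ a ∧ r (a - 1) (b - 1))

/-- A relation is modern: no configuration `x ◁ y` and `z ◁ y` with `x < y < z`. -/
def ModernRel (r : ℕ → ℕ → Prop) : Prop :=
  ¬∃ x y z, x < y ∧ y < z ∧ r x y ∧ r z y

/-- A new interval-poset of size `m`: no increasing relation starting at `1`, no decreasing
relation starting at `m`, and no pair of relations `i+1 ◁ j+1` and `j ◁ i` with `i < j`. -/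
def NewIP (m : ℕ) (r : ℕ → ℕ → Prop) : Prop :=
  IsIntervalPoset m r ∧
  (¬∃ y, 1 < y ∧ r 1 y) ∧
  (¬∃ x, x < m ∧ r m x) ∧
  ¬∃ i j, i < j ∧ r (i + 1) (j + 1) ∧ r j i

/-- The fall of a relation of size `m`: keep the decreasing relations, shift the increasing
relations by `−1`, on the ground set `{1,…,m−1}`. -/
def fallRel (m : ℕ) (r : ℕ → ℕ → Prop) : ℕ → ℕ → Prop := fun a b =>
  (a = b ∧ 1 ≤ a ∧ a ≤ m - 1) ∨ (b < a ∧ r a b) ∨ (a < b ∧ r (a + 1) (b + 1))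

/-- Iterated rise: `riseIter n r k` is the `k`-th rise of a relation of size `n`. -/
def riseIter (n : ℕ) (r : ℕ → ℕ → Prop) : ℕ → (ℕ → ℕ → Prop)
  | 0 => r
  | k + 1 => riseRel (n + k) (riseIter n r k)

/-- An infinitely modern relation: no configuration `w ◁ x` and `z ◁ y` with `w < x < y < z`. -/
def InfModernRel (r : ℕ → ℕ → Prop) : Prop :=
  ¬∃ w x y z, w < x ∧ x < y ∧ y < z ∧ r w x ∧ r z y

open Classical in
/-- `irStat n r`: the smallest `k` with an increasing relation `k ◁ k+1`, and `n` if none. -/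
noncomputable def irStat (n : ℕ) (r : ℕ → ℕ → Prop) : ℕ :=
  if ∃ k, r k (k + 1) then sInf {k | r k (k + 1)} else n

open Classical in
/-- `drStat n r`: the largest `i` with a decreasing relation `i ◁ i−1`, and `1` if none. -/
noncomputable def drStat (n : ℕ) (r : ℕ → ℕ → Prop) : ℕ :=
  if ∃ i, 2 ≤ i ∧ r i (i - 1) then sSup {i | 2 ≤ i ∧ r i (i - 1)} else 1
section Aux

open Relation

namespace BT

theorem rootLabel_pos {T : BT} (h : T ≠ leaf) : 1 ≤ T.rootLabel := by
  cases T with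
  | leaf => exact absurd rfl h
  | node l r => simp only [rootLabel]; omega

theorem rootLabel_le_size (T : BT) : T.rootLabel ≤ T.size := by
  cases T with
  | leaf => simp [rootLabel, size]
  | node l r => simp only [rootLabel, size]; omega

theorem rcRel_bounds : ∀ (T : BT) {a b}, rcRel T a b → 1 ≤ a ∧ a < b ∧ b ≤ T.size := by
  intro T
  induction T with
  | leaf => intro a b h; exact h.elim
  | node l r ihl ihr =>
    intro a b h
    rcases h with ⟨ha, hr, hb⟩ | h | ⟨a', b', h, ha, hb⟩
    · have h1 := rootLabel_pos hr
      have h2 := rootLabel_le_size r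
      simp only [size]; omega
    · have := ihl h; simp only [size]; omega
    · have := ihr h; simp only [size]; omega

theorem rcRel_left_of_snd_le {l r : BT} {a b : ℕ} (h : rcRel (node l r) a b)
    (hb : b ≤ l.size) : rcRel l a b := by
  rcases h with ⟨ha, hr, hb'⟩ | h | ⟨a', b', h, ha, hb'⟩
  · have := rootLabel_pos hr; omega
  · exact h
  · have := rcRel_bounds r h; omega

theorem rcRel_left_of_fst_le {l r : BT} {a b : ℕ} (h : rcRel (node l r) a b)
    (ha : a ≤ l.size) : rcRel l a b := by
  rcases h with ⟨ha', hr, hb'⟩ | h | ⟨a', b', h, ha', hb'⟩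
  · omega
  · exact h
  · have := rcRel_bounds r h; omega

theorem rcRel_ne_rootLabel : ∀ (T : BT) {a b}, rcRel T a b → b ≠ T.rootLabel := by
  intro T a b h
  cases T with
  | leaf => exact h.elim
  | node l r =>
    rcases h with ⟨ha, hr, hb⟩ | h | ⟨a', b', h, ha, hb⟩
    · have := rootLabel_pos hr; simp only [rootLabel]; omega
    · have := rcRel_bounds l h; simp only [rootLabel]; omega
    · have := rcRel_bounds r h; simp only [rootLabel]; omega

theorem rcRel_rootLabel_not_interior : ∀ (T : BT) {a b}, rcRel T a b →
    ¬(a < T.rootLabel ∧ T.rootLabel < b) := by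
  intro T a b h
  cases T with
  | leaf => exact h.elim
  | node l r =>
    rcases h with ⟨ha, hr, hb⟩ | h | ⟨a', b', h, ha, hb⟩
    · simp only [rootLabel]; omega
    · have := rcRel_bounds l h; simp only [rootLabel]; omega
    · have := rcRel_bounds r h; simp only [rootLabel]; omega

theorem rcRel_child_unique : ∀ (T : BT) {a b b'}, rcRel T a b → rcRel T a b' → b = b' := by
  intro T
  induction T with
  | leaf => intro a b b' h; exact h.elim
  | node l r ihl ihr =>
    intro a b b' h1 h2
    rcases h1 with ⟨ha, hr, hb⟩ | h1 | ⟨a1, b1, h1, ha1, hb1⟩ <;>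
      rcases h2 with ⟨ha', hr', hb'⟩ | h2 | ⟨a2, b2, h2, ha2, hb2⟩
    · omega
    · have := rcRel_bounds l h2; omega
    · have := rcRel_bounds r h2; omega
    · have := rcRel_bounds l h1; omega
    · exact ihl h1 h2
    · have := rcRel_bounds l h1; have := rcRel_bounds r h2; omega
    · have := rcRel_bounds r h1; omega
    · have := rcRel_bounds r h1; have := rcRel_bounds l h2; omega
    · have hb := rcRel_bounds r h1; have hb' := rcRel_bounds r h2
      have : a1 = a2 := by omega
      subst this
      have := ihr h1 h2; omega

theorem rcRel_parent_unique : ∀ (T : BT) {a a' b}, rcRel T a b → rcRel T a' b → a = a' := by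
  intro T
  induction T with
  | leaf => intro a a' b h; exact h.elim
  | node l r ihl ihr =>
    intro a a' b h1 h2
    rcases h1 with ⟨ha, hr, hb⟩ | h1 | ⟨a1, b1, h1, ha1, hb1⟩ <;>
      rcases h2 with ⟨ha', hr', hb'⟩ | h2 | ⟨a2, b2, h2, ha2, hb2⟩
    · omega
    · have := rcRel_bounds l h2; have := rootLabel_pos hr; omega
    · -- b = l.size + 1 + rootLabel r and b = b2 + l.size + 1, so b2 = rootLabel r
      have hne := rcRel_ne_rootLabel r h2
      omega
    · have := rcRel_bounds l h1; have := rootLabel_pos hr'; omega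
    · exact ihl h1 h2
    · have := rcRel_bounds l h1; have := rcRel_bounds r h2; omega
    · have hne := rcRel_ne_rootLabel r h1; omega
    · have := rcRel_bounds r h1; have := rcRel_bounds l h2; omega
    · have hb := rcRel_bounds r h1; have hb' := rcRel_bounds r h2
      have : b1 = b2 := by omega
      subst this
      have := ihr h1 h2; omega

/-- Key nesting lemma: one `rcRel` step from inside the open interval `(a,b)` of an
`rcRel` pair stays inside. -/
theorem rcRel_step_interval : ∀ (T : BT) {a b m c}, rcRel T a b → a < m → m < b →
    (rcRel T m c ∨ rcRel T c m) → a < c ∧ c < b := by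
  intro T
  induction T with
  | leaf => intro a b m c h; exact h.elim
  | node l r ihl ihr =>
    intro a b m c hab ham hmb hstep
    rcases hab with ⟨ha, hr, hb⟩ | hab | ⟨a', b', hab, ha, hb⟩
    · -- root case
      cases r with
      | leaf => exact absurd rfl hr
      | node rl rr =>
        have hmb' : m < l.size + 1 + (rl.size + 1) := by
          simpa [rootLabel] using hb ▸ hmb
        rcases hstep with h | h
        · rcases h with ⟨hm, _, _⟩ | h | ⟨m', c', h, hm, hc⟩
          · omega
          · have := rcRel_bounds l h; omega
          · have hm' : m' ≤ rl.size := by omega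
            have := rcRel_bounds rl (rcRel_left_of_fst_le h hm')
            simp only [rootLabel] at hb ⊢; omega
        · rcases h with ⟨hc, hr', hm⟩ | h | ⟨c', m', h, hc, hm⟩
          · simp only [rootLabel] at hm; omega
          · have := rcRel_bounds l h; omega
          · have hm' : m' ≤ rl.size := by omega
            have := rcRel_bounds rl (rcRel_left_of_snd_le h hm')
            simp only [rootLabel] at hb ⊢; omega
    · -- left subtree
      have hb := rcRel_bounds l hab
      rcases hstep with h | h
      · exact ihl hab ham hmb (Or.inl (rcRel_left_of_fst_le h (by omega)))
      · exact ihl hab ham hmb (Or.inr (rcRel_left_of_snd_le h (by omega)))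
    · -- right subtree
      have hb' := rcRel_bounds r hab
      rcases hstep with h | h
      · rcases h with ⟨hm, _, _⟩ | h | ⟨m', c', h, hm, hc⟩
        · omega
        · have := rcRel_bounds l h; omega
        · have := ihr hab (show a' < m' by omega) (show m' < b' by omega) (Or.inl h)
          omega
      · rcases h with ⟨hc, hr', hm⟩ | h | ⟨c', m', h, hc, hm⟩
        · -- m = l.size + 1 + rootLabel r: root of r interior to (a',b'), impossible
          exfalso
          exact rcRel_rootLabel_not_interior r hab ⟨by omega, by omega⟩
        · have := rcRel_bounds l h; omega
        · have := ihr hab (show a' < m' by omega) (show m' < b' by omega) (Or.inr h)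
          omega

end BT

theorem rtg_swap {α} {r : α → α → Prop} {a b : α} (h : Relation.ReflTransGen r a b) :
    Relation.ReflTransGen (fun x y => r y x) b a := by
  induction h with
  | refl => exact .refl
  | tail _ hr ih => exact Relation.ReflTransGen.head hr ih

theorem rtg_comparable {α} {r : α → α → Prop}
    (hfun : ∀ a b b', r a b → r a b' → b = b')
    {c i k : α} (hci : Relation.ReflTransGen r c i) :
    Relation.ReflTransGen r c k →
      Relation.ReflTransGen r i k ∨ Relation.ReflTransGen r k i := by
  induction hci using Relation.ReflTransGen.head_induction_on with
  | refl => exact fun h => Or.inl h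
  | head h' h ih =>
    rename_i a d
    intro hck
    rcases hck.cases_head with heq | ⟨d', hd', hk⟩
    · subst heq; exact Or.inr (Relation.ReflTransGen.head h' h)
    · have hdd : d = d' := hfun _ _ _ h' hd'
      subst hdd
      exact ih hk

theorem sameBlock_common (T : BT) {x y : ℕ} (h : sameBlock T x y) :
    ∃ c, Relation.ReflTransGen T.rcRel c x ∧ Relation.ReflTransGen T.rcRel c y := by
  induction h with
  | rel a b hab =>
    rcases hab with h | h
    · exact ⟨a, .refl, .single h⟩
    · exact ⟨b, .single h, .refl⟩
  | refl a => exact ⟨a, .refl, .refl⟩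
  | symm a b _ ih => obtain ⟨c, h1, h2⟩ := ih; exact ⟨c, h2, h1⟩
  | trans a b c _ _ ih1 ih2 =>
    obtain ⟨u, hua, hub⟩ := ih1
    obtain ⟨v, hvb, hvc⟩ := ih2
    have hcomp := rtg_comparable
      (r := fun x y => T.rcRel y x)
      (fun _ _ _ h1 h2 => BT.rcRel_parent_unique T h1 h2)
      (rtg_swap hub) (rtg_swap hvb)
    rcases hcomp with h | h
    · -- RTG swap u v, i.e. RTG r v u
      exact ⟨v, (rtg_swap h).trans hua, hvc⟩
    · exact ⟨u, hua, (rtg_swap h).trans hvc⟩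

theorem rtg_rcRel_le {T : BT} {a b : ℕ} (h : Relation.ReflTransGen T.rcRel a b) : a ≤ b := by
  induction h with
  | refl => exact le_rfl
  | tail _ hr ih => have := BT.rcRel_bounds T hr; omega

theorem sameBlock_interval (T : BT) {p q : ℕ} (hpq : T.rcRel p q) {x y : ℕ}
    (h : sameBlock T x y) : (p < x ∧ x < q) ↔ (p < y ∧ y < q) := by
  induction h with
  | rel a b hab =>
    constructor
    · intro hx
      exact BT.rcRel_step_interval T hpq hx.1 hx.2 hab
    · intro hy
      exact BT.rcRel_step_interval T hpq hy.1 hy.2 hab.symm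
  | refl a => exact Iff.rfl
  | symm a b _ ih => exact ih.symm
  | trans a b c _ _ ih1 ih2 => exact ih1.trans ih2

theorem chain_find (T : BT) {j k : ℕ} {i : ℕ}
    (h : Relation.ReflTransGen T.rcRel i k) :
    i ≤ j → j < k →
      sameBlock T i j ∨ ∃ p q, T.rcRel p q ∧ p < j ∧ j < q ∧ q ≤ k := by
  induction h using Relation.ReflTransGen.head_induction_on with
  | refl => intro h1 h2; omega
  | head h' h ih =>
    rename_i a d
    intro hij hjk
    by_cases hd : d ≤ j
    · rcases ih hd hjk with hs | hex
      · exact Or.inl ((Relation.EqvGen.rel a d (Or.inl h')).trans _ _ _ hs)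
      · exact Or.inr hex
    · rcases eq_or_lt_of_le hij with rfl | haj
      · exact Or.inl (Relation.EqvGen.refl _)
      · exact Or.inr ⟨a, d, h', haj, by omega, rtg_rcRel_le h⟩

end Aux

/-- the partition `π_T` associated to a binary tree (finest partition in which
each vertex and its right child share a block, under in-order labelling) is noncrossing. -/
theorem tree_partition_noncrossing (T : BT) : IsNoncrossingRel (sameBlock T) := by
  rintro ⟨i, j, k, l, hij, hjk, hkl, hik, hjl, hnij⟩
  obtain ⟨c, hci, hck⟩ := sameBlock_common T hik
  rcases rtg_comparable (r := T.rcRel) (fun _ _ _ h1 h2 => BT.rcRel_child_unique T h1 h2) hci hck with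
    hik' | hki
  · rcases chain_find T hik' (le_of_lt hij) hjk with hs | ⟨p, q, hpq, hpj, hjq, hqk⟩
    · exact hnij hs
    · have := (sameBlock_interval T hpq hjl).mp ⟨hpj, hjq⟩
      omega
  · have := rtg_rcRel_le hki; omega
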